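/- Let N ≥ 1, ε ∈ (0, 1], and let α, β : ℝᴺ → ℝ be C¹ functions with |α(y)|, |β(y)|, ‖α′(y)‖, ‖β′(y)‖ ≤ M for all y and β(y) ≥ β₀ > 0. Let Ū : ℝᴺ → ℝ be C¹ with K := sup_y (1 + ‖y‖)(|Ū(y)| + ‖∇Ū(y)‖) < ∞. For P, x ∈ ℝᴺ set W(P) := α(εP)·Ū(β(εP)(x − P)). Then for every unit vector e ∈ ℝᴺ the directional derivative of P ↦ W(P) along e exists and satisfies ∂_e W(P) = −α(εP)β(εP)·⟨∇Ū(β(εP)(x − P)), e⟩ + R, where |R| ≤ ε·M·K·(1 + M/β₀), uniformly in P and x. -/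

import Mathlib

open RealInnerProductSpace

/-! The product and chain rules give the derivative of `W` along `e` exactly: the main term
comes from differentiating `x − P` inside `Ū`, and the remainder collects the two terms in which
`α(εP)` or `β(εP)` is differentiated, each carrying a factor `ε`. The decay weight `1 + ‖y‖` in
`K` controls both: `|Ū| ≤ K`, and `‖∇Ū(β(x − P))‖ ‖x − P‖ ≤ K / β₀` because `β ≥ β₀`. -/

section InnerProductSpace

variable {E : Type*} [NormedAddCommGroup E] [InnerProductSpace ℝ E] [CompleteSpace E]

theorem hasLineDerivAt_mul_comp_smul_sub {α β U : E → ℝ} {ε : ℝ} {x P : E} (e : E)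
    (hα : DifferentiableAt ℝ α (ε • P)) (hβ : DifferentiableAt ℝ β (ε • P))
    (hU : DifferentiableAt ℝ U (β (ε • P) • (x - P))) :
    HasLineDerivAt ℝ (fun P' => α (ε • P') * U (β (ε • P') • (x - P')))
      (-(α (ε • P) * β (ε • P)) * ⟪gradient U (β (ε • P) • (x - P)), e⟫
        + (ε * fderiv ℝ α (ε • P) e * U (β (ε • P) • (x - P))
          + α (ε • P) * (ε * fderiv ℝ β (ε • P) e)
            * ⟪gradient U (β (ε • P) • (x - P)), x - P⟫)) P e := by
  have hs : HasFDerivAt (fun P' : E => ε • P') (ε • ContinuousLinearMap.id ℝ E) P :=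
    (hasFDerivAt_id P).const_smul ε
  have hA := hα.hasFDerivAt.comp P hs
  have hV := (hβ.hasFDerivAt.comp P hs).smul ((hasFDerivAt_id P).const_sub x)
  have hW := hU.hasFDerivAt.comp P hV
  convert (hA.mul hW).hasLineDerivAt e using 1
  · rfl
  · simp
    ring

theorem abs_inner_gradient_smul_le {U : E → ℝ} {b β₀ K : ℝ} {v : E} (hβ₀ : 0 < β₀) (hb : β₀ ≤ b)
    (hK : (1 + ‖b • v‖) * (|U (b • v)| + ‖gradient U (b • v)‖) ≤ K) :
    |⟪gradient U (b • v), v⟫| ≤ K / β₀ := by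
  set g := gradient U (b • v)
  have hgv : ‖g‖ * (b * ‖v‖) ≤ K := by
    rw [norm_smul, Real.norm_of_nonneg (hβ₀.trans_le hb).le] at hK
    have hbv : 0 ≤ b * ‖v‖ := mul_nonneg (hβ₀.trans_le hb).le (norm_nonneg v)
    nlinarith [mul_nonneg hbv (abs_nonneg (U (b • v))), abs_nonneg (U (b • v)), norm_nonneg g]
  rw [le_div_iff₀ hβ₀]
  calc |⟪g, v⟫| * β₀ ≤ ‖g‖ * ‖v‖ * b := by
        gcongr
        exact abs_real_inner_le_norm g v
    _ ≤ K := by linarith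

end InnerProductSpace

theorem abs_le_of_weighted_bound {u g r K : ℝ} (hg : 0 ≤ g) (hr : 0 ≤ r)
    (hK : (1 + r) * (|u| + g) ≤ K) : |u| ≤ K := by
  nlinarith [abs_nonneg u]

theorem abs_add_le_of_bounds {ε M K β₀ a da db u s : ℝ} (hε : 0 ≤ ε)
    (ha : |a| ≤ M) (hda : |da| ≤ M) (hdb : |db| ≤ M) (hu : |u| ≤ K) (hs : |s| ≤ K / β₀) :
    |ε * da * u + a * (ε * db) * s| ≤ ε * M * K * (1 + M / β₀) := by
  have hM : 0 ≤ M := (abs_nonneg a).trans ha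
  have hK : 0 ≤ K := (abs_nonneg u).trans hu
  calc |ε * da * u + a * (ε * db) * s|
      ≤ ε * M * K + M * (ε * M) * (K / β₀) := by
        refine (abs_add_le _ _).trans (add_le_add ?_ ?_) <;>
          simp only [abs_mul, abs_of_nonneg hε] <;> gcongr
    _ = ε * M * K * (1 + M / β₀) := by ring

theorem stmt11_general (N : ℕ) (ε : ℝ) (hε0 : 0 < ε)
    (α β : EuclideanSpace ℝ (Fin N) → ℝ) (hα : ContDiff ℝ 1 α) (hβ : ContDiff ℝ 1 β)
    (M β₀ : ℝ) (hβ₀ : 0 < β₀)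
    (hαb : ∀ y, |α y| ≤ M)
    (hαd : ∀ y, ‖fderiv ℝ α y‖ ≤ M) (hβd : ∀ y, ‖fderiv ℝ β y‖ ≤ M)
    (hβlb : ∀ y, β₀ ≤ β y)
    (Ubar : EuclideanSpace ℝ (Fin N) → ℝ) (hUbar : ContDiff ℝ 1 Ubar)
    (K : ℝ) (hK : ∀ y, (1 + ‖y‖) * (|Ubar y| + ‖gradient Ubar y‖) ≤ K) :
    ∀ (x P e : EuclideanSpace ℝ (Fin N)), ‖e‖ = 1 →
      ∃ R : ℝ, |R| ≤ ε * M * K * (1 + M / β₀) ∧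
        HasLineDerivAt ℝ (fun P' => α (ε • P') * Ubar (β (ε • P') • (x - P')))
          (-(α (ε • P) * β (ε • P)) * ⟪gradient Ubar (β (ε • P) • (x - P)), e⟫ + R)
          P e := by
  intro x P e he
  have hunit (L : EuclideanSpace ℝ (Fin N) →L[ℝ] ℝ) (hL : ‖L‖ ≤ M) : |L e| ≤ M := by
    simpa [he] using L.le_of_opNorm_le hL e
  refine ⟨_, ?_, hasLineDerivAt_mul_comp_smul_sub e (hα.differentiable one_ne_zero _)
    (hβ.differentiable one_ne_zero _) (hUbar.differentiable one_ne_zero _)⟩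
  exact abs_add_le_of_bounds hε0.le (hαb _) (hunit _ (hαd _)) (hunit _ (hβd _))
    (abs_le_of_weighted_bound (norm_nonneg _) (norm_nonneg _) (hK _))
    (abs_inner_gradient_smul_le hβ₀ (hβlb _) (hK _))

/-- Estimate (3.3) in the proof of Lemma 3.1: for `W(P) = α(εP) Ū(β(εP)(x − P))`, the
directional derivative along a unit vector `e` is
`−α(εP)β(εP)⟨∇Ū(β(εP)(x − P)), e⟩ + R` with `|R| ≤ ε M K (1 + M/β₀)`. -/
theorem stmt11 (N : ℕ) (hN : 1 ≤ N) (ε : ℝ) (hε0 : 0 < ε) (hε1 : ε ≤ 1)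
    (α β : EuclideanSpace ℝ (Fin N) → ℝ) (hα : ContDiff ℝ 1 α) (hβ : ContDiff ℝ 1 β)
    (M β₀ : ℝ) (hβ₀ : 0 < β₀)
    (hαb : ∀ y, |α y| ≤ M) (hβb : ∀ y, |β y| ≤ M)
    (hαd : ∀ y, ‖fderiv ℝ α y‖ ≤ M) (hβd : ∀ y, ‖fderiv ℝ β y‖ ≤ M)
    (hβlb : ∀ y, β₀ ≤ β y)
    (Ubar : EuclideanSpace ℝ (Fin N) → ℝ) (hUbar : ContDiff ℝ 1 Ubar)
    (K : ℝ) (hK : ∀ y, (1 + ‖y‖) * (|Ubar y| + ‖gradient Ubar y‖) ≤ K) :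
    ∀ (x P e : EuclideanSpace ℝ (Fin N)), ‖e‖ = 1 →
      ∃ R : ℝ, |R| ≤ ε * M * K * (1 + M / β₀) ∧
        HasLineDerivAt ℝ (fun P' => α (ε • P') * Ubar (β (ε • P') • (x - P')))
          (-(α (ε • P) * β (ε • P)) * ⟪gradient Ubar (β (ε • P) • (x - P)), e⟫ + R)
          P e :=
  stmt11_general N ε hε0 α β hα hβ M β₀ hβ₀ hαb hαd hβd hβlb Ubar hUbar K hK
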